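/- arXiv:1203.4756 — 3 statements merged into one kernel-verified Lean document; each statement's English description precedes it below -/
import Mathlib

section
/- Let g₁ be a continuous function supported in [-T/2, T/2] with Laplace transform G₁, and let s₀ be a zero of G₁. Then the function g₂(t) = g₁(t) + (s₀ + conj(s₀)) e^{s₀ t} ∫_{-T/2}^{t} g₁(τ) e^{-s₀ τ} dτ (for t ≥ -T/2, and g₂(t)=g₁(t)=0 for t < -T/2) also vanishes outside [-T/2, T/2]. -/
/-! Beyond `T/2` the running integral in `g₂` has swept the whole support of `g₁`, so it equals
`G₁(s₀) = 0`; before `-T/2` the filter output is `g₁` itself. -/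

open MeasureTheory Set

theorem intervalIntegral_eq_integral_of_forall_notMem_Icc {E : Type*} [NormedAddCommGroup E]
    [NormedSpace ℝ E] {f : ℝ → E} {a b c : ℝ} (hf : ∀ x ∉ Icc a b, f x = 0) (hac : a ≤ c)
    (hbc : b ≤ c) : ∫ x in a..c, f x = ∫ x, f x := by
  rw [intervalIntegral.integral_of_le hac, ← integral_Icc_eq_integral_Ioc]
  exact setIntegral_eq_integral_of_forall_compl_eq_zero
    fun x hx => hf x fun hab => hx ⟨hab.1, hab.2.trans hbc⟩

theorem allpass_preserves_support_general (T : ℝ) (g₁ g₂ : ℝ → ℂ) (s₀ : ℂ)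
    (hsupp : ∀ t : ℝ, |t| > T / 2 → g₁ t = 0)
    (hzero : (∫ t : ℝ, g₁ t * Complex.exp (-(s₀ * t))) = 0)
    (hg₂ : ∀ t : ℝ, -T / 2 ≤ t →
      g₂ t = g₁ t + (s₀ + (starRingEnd ℂ) s₀) * Complex.exp (s₀ * t) *
        ∫ τ in (-T / 2)..t, g₁ τ * Complex.exp (-(s₀ * τ)))
    (hg₂' : ∀ t : ℝ, t < -T / 2 → g₂ t = g₁ t) :
    ∀ t : ℝ, |t| > T / 2 → g₂ t = 0 := by
  intro t ht
  rcases lt_or_ge t (-T / 2) with hlt | hge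
  · rw [hg₂' t hlt, hsupp t ht]
  have hTt : T / 2 < t := by
    rcases lt_abs.mp ht with h | h
    · exact h
    · linarith
  have hvanish : ∀ x ∉ Icc (-T / 2) (T / 2), g₁ x * Complex.exp (-(s₀ * x)) = 0 :=
    fun x hx => by
      rw [hsupp x (lt_of_not_ge fun h => hx (by rw [neg_div]; exact abs_le.mp h)), zero_mul]
  rw [hg₂ t hge, intervalIntegral_eq_integral_of_forall_notMem_Icc hvanish hge hTt.le, hzero,
    hsupp t ht, mul_zero, zero_add]

/-- Passing a function supported in `[-T/2, T/2]` through the all-pass filter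
with impulse response `δ(t) + (s₀ + conj s₀) e^{s₀ t} U(t)`, where `s₀` is a
zero of its Laplace transform, preserves the support `[-T/2, T/2]`. -/
theorem allpass_preserves_support (T : ℝ) (g₁ g₂ : ℝ → ℂ) (s₀ : ℂ)
    (hcont : Continuous g₁)
    (hsupp : ∀ t : ℝ, |t| > T / 2 → g₁ t = 0)
    (hzero : (∫ t : ℝ, g₁ t * Complex.exp (-(s₀ * t))) = 0)
    (hg₂ : ∀ t : ℝ, -T / 2 ≤ t →
      g₂ t = g₁ t + (s₀ + (starRingEnd ℂ) s₀) * Complex.exp (s₀ * t) *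
        ∫ τ in (-T / 2)..t, g₁ τ * Complex.exp (-(s₀ * τ)))
    (hg₂' : ∀ t : ℝ, t < -T / 2 → g₂ t = g₁ t) :
    ∀ t : ℝ, |t| > T / 2 → g₂ t = 0 :=
  allpass_preserves_support_general T g₁ g₂ s₀ hsupp hzero hg₂ hg₂'
end

section
/- Let E(s) = (1/2)‖|Fs| - r‖² where F is the unitary DFT. At any point s where Fs has no zero coordinates, the gradient ∇E(s) = s - F⁻¹(r ∘ Fs/|Fs|) is an eigenvector of the (real) Hessian ∇²E(s) with eigenvalue 1; equivalently (∇²E)(∇E) = ∇E. -/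
open Matrix Complex

/-!
In Fourier coordinates the gradient is `F ∇E = (1 - r/|z|) ∘ z`, coordinatewise a real multiple
of `z`. For `w = x z` with `x` real, `z² conj w / |z|³ = w / |z|`, so the antilinear part of the
Hessian contributes `(r/(2|z|)) w` and exactly cancels the `-r/(2|z|)` of its linear part: the
Hessian acts as the identity on `F ∇E`, and unitarity of `F` carries this back.
-/

theorem sq_div_norm_cube_mul_conj_ofReal_mul (z : ℂ) (x : ℝ) :
    z ^ 2 / (‖z‖ : ℂ) ^ 3 * starRingEnd ℂ (x * z) = x * z / ‖z‖ := by
  rcases eq_or_ne z 0 with rfl | hz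
  · simp -- both sides are `0`, by the convention `x / 0 = 0`
  have hnorm : (‖z‖ : ℂ) ≠ 0 := by exact_mod_cast norm_ne_zero_iff.mpr hz
  have hzconj : z * starRingEnd ℂ z = (‖z‖ : ℂ) ^ 2 := mul_conj' z
  rw [map_mul, conj_ofReal, div_mul_eq_mul_div, div_eq_div_iff (pow_ne_zero 3 hnorm) hnorm]
  linear_combination (x * z * ‖z‖) * hzconj

theorem hessian_coord_ofReal_mul_eq_self (z : ℂ) (ρ x : ℝ) :
    (1 - ρ / (2 * (‖z‖ : ℂ))) * (x * z) +
      ρ * z ^ 2 / (2 * (‖z‖ : ℂ) ^ 3) * starRingEnd ℂ (x * z) = x * z := by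
  have h := sq_div_norm_cube_mul_conj_ofReal_mul z x
  calc _ = (1 - ρ / (2 * (‖z‖ : ℂ))) * (x * z) +
        ρ / 2 * (z ^ 2 / (‖z‖ : ℂ) ^ 3 * starRingEnd ℂ (x * z)) := by ring
    _ = x * z := by rw [h]; ring

theorem gradient_is_hessian_eigenvector_general (n : ℕ)
    (F : Matrix (Fin n) (Fin n) ℂ)
    (hunit : F.conjTranspose * F = 1)
    (r : Fin n → ℝ)
    (s z : Fin n → ℂ) (hz : z = F.mulVec s)
    (g : Fin n → ℂ)
    (hg : g = s - F.conjTranspose.mulVec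
      (fun i => (r i : ℂ) * z i / (‖z i‖ : ℂ)))
    (hess : (Fin n → ℂ) → (Fin n → ℂ))
    (hhess : ∀ a : Fin n → ℂ, hess a = F.conjTranspose.mulVec (fun i =>
      (1 - (r i : ℂ) / (2 * (‖z i‖ : ℂ))) * (F.mulVec a) i +
      ((r i : ℂ) * (z i) ^ 2 / (2 * (‖z i‖ : ℂ) ^ 3)) *
        (starRingEnd ℂ) ((F.mulVec a) i))) :
    hess g = g := by
  have hFg : F *ᵥ g = fun i => ((1 - r i / ‖z i‖ : ℝ) : ℂ) * z i := by
    rw [hg, mulVec_sub, mulVec_mulVec, mul_eq_one_comm.mp hunit, one_mulVec, ← hz]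
    funext i
    simp only [Pi.sub_apply]
    push_cast
    ring
  have hcoord := fun i => hessian_coord_ofReal_mul_eq_self (z i) (r i) (1 - r i / ‖z i‖)
  rw [hhess, hFg]
  simp only [hcoord]
  rw [← hFg, mulVec_mulVec, hunit, one_mulVec]

/-- For `E(s) = (1/2)‖|Fs| - r‖²` with `F` the unitary DFT, at any point where
`Fs` has no zero coordinate, the gradient `∇E(s) = s - F⁻¹(r ∘ Fs/|Fs|)` is an
eigenvector of the Hessian with eigenvalue `1`: `(∇²E)(∇E) = ∇E`. -/
theorem gradient_is_hessian_eigenvector (n : ℕ) (hn : 0 < n)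
    (F : Matrix (Fin n) (Fin n) ℂ)
    (hF : ∀ j k : Fin n, F j k = (1 / Real.sqrt n : ℝ) *
      Complex.exp (-(2 * Real.pi * Complex.I * (j : ℕ) * (k : ℕ)) / n))
    (hunit : F.conjTranspose * F = 1)
    (r : Fin n → ℝ) (hr : ∀ i, 0 ≤ r i)
    (s z : Fin n → ℂ) (hz : z = F.mulVec s) (hznz : ∀ i, z i ≠ 0)
    (g : Fin n → ℂ)
    (hg : g = s - F.conjTranspose.mulVec
      (fun i => (r i : ℂ) * z i / (‖z i‖ : ℂ)))
    (hess : (Fin n → ℂ) → (Fin n → ℂ))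
    (hhess : ∀ a : Fin n → ℂ, hess a = F.conjTranspose.mulVec (fun i =>
      (1 - (r i : ℂ) / (2 * (‖z i‖ : ℂ))) * (F.mulVec a) i +
      ((r i : ℂ) * (z i) ^ 2 / (2 * (‖z i‖ : ℂ) ^ 3)) *
        (starRingEnd ℂ) ((F.mulVec a) i))) :
    hess g = g :=
  gradient_is_hessian_eigenvector_general n F hunit r s z hz g hg hess hhess
end

section
/- Let C = diag(t̂) F² where t̂ = Ft for a real vector t and F² acts as index reversal modulo n. For each index pair (k, l) exchanged by F² (t̂_l = conj(t̂_k)), the vectors e_k + (|t̂_k|/t̂_k) e_l and e_k - (|t̂_k|/t̂_k) e_l are eigenvectors of C with eigenvalues |t̂_k| and -|t̂_k| respectively (assuming t̂_k ≠ 0); and for each index m fixed by F², e_m is an eigenvector with eigenvalue t̂_m. -/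
/-!
Write `θ = t̂ₖ` and `a = |θ|/θ`. Since `t` is real and `F(-k, j) = conj F(k, j)`, the spectrum
`t̂` is conjugate symmetric, so `t̂₋ₖ = conj θ = |θ| a` and `a θ = |θ|`. The operator
`C v = t̂ ⊙ (v ∘ neg)` sends `eₖ` to `t̂₋ₖ e₋ₖ`, so on `span {eₖ, e₋ₖ}` it acts by the matrix
`[[0, θ], [|θ| a, 0]]`, whose eigenvectors are `eₖ ± a e₋ₖ` with eigenvalues `±|θ|`.
-/

open Matrix ComplexConjugate

section RCLike

variable {𝕜 : Type*} [RCLike 𝕜]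

theorem RCLike.norm_div_self_mul_self (z : 𝕜) : (‖z‖ : 𝕜) / z * z = ‖z‖ := by
  rcases eq_or_ne z 0 with rfl | hz
  · simp
  · exact div_mul_cancel₀ _ hz

theorem RCLike.conj_eq_norm_mul_norm_div_self (z : 𝕜) : conj z = ‖z‖ * (‖z‖ / z) := by
  rcases eq_or_ne z 0 with rfl | hz
  · simp
  · rw [mul_div_assoc', eq_div_iff hz, ← sq, ← RCLike.conj_mul]

end RCLike

section Reversal

variable {ι R : Type*} [InvolutiveNeg ι] [CommSemiring R]

/-- The paper's `diag(d) F²`, with `F²` acting as the index reversal `v ↦ v ∘ neg`. -/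
def diagReversal (d : ι → R) : (ι → R) →ₗ[R] ι → R where
  toFun v j := d j * v (-j)
  map_add' _ _ := by ext; simp [mul_add]
  map_smul' _ _ := by ext; simp [mul_left_comm]

theorem diagReversal_apply (d v : ι → R) (j : ι) : diagReversal d v j = d j * v (-j) := rfl

variable [DecidableEq ι]

theorem diagReversal_single (d : ι → R) (k : ι) (c : R) :
    diagReversal d (Pi.single k c) = Pi.single (-k) (d (-k) * c) := by
  ext j
  rcases eq_or_ne j (-k) with rfl | hj
  · simp [diagReversal_apply]
  · simp [diagReversal_apply, hj, neg_eq_iff_eq_neg]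

theorem diagReversal_single_of_neg_eq (d : ι → R) {m : ι} (hm : -m = m) :
    diagReversal d (Pi.single m 1) = d m • Pi.single m 1 := by
  rw [diagReversal_single, hm, mul_one, ← Pi.single_smul', smul_eq_mul, mul_one]

theorem diagReversal_single_add_smul_single {d : ι → R} {k : ι} {a μ : R}
    (hneg : d (-k) = μ * a) (hk : a * d k = μ) :
    diagReversal d (Pi.single k 1 + a • Pi.single (-k) 1) =
      μ • (Pi.single k 1 + a • Pi.single (-k) 1) := by
  rw [map_add, map_smul, diagReversal_single, diagReversal_single, neg_neg, hneg]
  simp only [smul_add, ← Pi.single_smul', smul_eq_mul, mul_one]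
  rw [hk, add_comm]

end Reversal

section DFT

noncomputable def dftMatrix (n : ℕ) : Matrix (Fin n) (Fin n) ℂ :=
  Matrix.of fun j k => (1 / Real.sqrt n : ℝ) *
    Complex.exp (-(2 * Real.pi * Complex.I * (j : ℕ) * (k : ℕ)) / n)

theorem exp_dft_eq_conj_of_dvd_add {n a b : ℕ} (hn : n ≠ 0) (hab : n ∣ a + b) (j : ℕ) :
    Complex.exp (-(2 * Real.pi * Complex.I * a * j) / n) =
      conj (Complex.exp (-(2 * Real.pi * Complex.I * b * j) / n)) := by
  obtain ⟨m, hm⟩ := hab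
  have hmC : (a : ℂ) + b = n * m := by exact_mod_cast hm
  have hnC : (n : ℂ) ≠ 0 := by exact_mod_cast hn
  rw [← Complex.exp_conj, Complex.exp_eq_exp_iff_exists_int]
  refine ⟨-(m * j : ℕ), ?_⟩
  simp only [map_div₀, map_neg, map_mul, map_ofNat, Complex.conj_ofReal, Complex.conj_I,
    map_natCast]
  push_cast
  field_simp
  linear_combination (-(j : ℂ)) * hmC

variable {n : ℕ} [NeZero n]

theorem conj_dftMatrix_apply (j k : Fin n) : conj (dftMatrix n j k) = dftMatrix n (-j) k := by
  have hdvd : n ∣ ((-j : Fin n) : ℕ) + j := by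
    rw [Nat.dvd_iff_mod_eq_zero, ← Fin.val_add, neg_add_cancel, Fin.val_zero]
  simp only [dftMatrix, of_apply, map_mul, Complex.conj_ofReal,
    exp_dft_eq_conj_of_dvd_add (NeZero.ne n) hdvd]

theorem dftMatrix_mulVec_ofReal_neg (t : Fin n → ℝ) (k : Fin n) :
    (dftMatrix n *ᵥ fun i => (t i : ℂ)) (-k) = conj ((dftMatrix n *ᵥ fun i => (t i : ℂ)) k) := by
  simp only [mulVec, dotProduct, map_sum, map_mul, Complex.conj_ofReal, conj_dftMatrix_apply]

end DFT

theorem diag_reversal_eigenvectors_general (n : ℕ) [NeZero n]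
    (F : Matrix (Fin n) (Fin n) ℂ)
    (hF : ∀ j k : Fin n, F j k = (1 / Real.sqrt n : ℝ) *
      Complex.exp (-(2 * Real.pi * Complex.I * (j : ℕ) * (k : ℕ)) / n))
    (t : Fin n → ℝ) (that : Fin n → ℂ)
    (hthat : that = F.mulVec (fun i => (t i : ℂ)))
    (C : (Fin n → ℂ) → (Fin n → ℂ))
    (hC : ∀ (v : Fin n → ℂ) (j : Fin n), C v j = that j * v (-j))
    (k l : Fin n) (hl : l = -k)
    (a : ℂ) (ha : a = (‖that k‖ : ℂ) / that k) :
    C ((Pi.single k 1 : Fin n → ℂ) + a • (Pi.single l 1 : Fin n → ℂ)) =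
      ((‖that k‖ : ℂ)) • ((Pi.single k 1 : Fin n → ℂ) + a • (Pi.single l 1 : Fin n → ℂ)) ∧
    C ((Pi.single k 1 : Fin n → ℂ) - a • (Pi.single l 1 : Fin n → ℂ)) =
      (-(‖that k‖ : ℂ)) • ((Pi.single k 1 : Fin n → ℂ) - a • (Pi.single l 1 : Fin n → ℂ)) ∧
    (∀ m : Fin n, -m = m → C ((Pi.single m 1 : Fin n → ℂ)) = that m • (Pi.single m 1 : Fin n → ℂ)) := by
  obtain rfl : F = dftMatrix n := Matrix.ext hF
  obtain rfl : C = diagReversal that := funext fun v => funext (hC v)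
  subst hl
  have hneg : that (-k) = ‖that k‖ * a := by
    rw [hthat, dftMatrix_mulVec_ofReal_neg, ← hthat, ha]
    exact RCLike.conj_eq_norm_mul_norm_div_self _
  have hk : a * that k = ‖that k‖ := ha ▸ RCLike.norm_div_self_mul_self (that k)
  refine ⟨diagReversal_single_add_smul_single hneg hk, ?_, fun m hm ↦
    diagReversal_single_of_neg_eq that hm⟩
  simpa only [sub_eq_add_neg, ← neg_smul, neg_mul, neg_mul_neg] using
    diagReversal_single_add_smul_single (a := -a) (μ := -‖that k‖) (by rw [hneg, neg_mul_neg])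
      (by rw [neg_mul, hk])

/-- Eigenvectors and eigenvalues of `C = diag(t̂) F²` where `t̂ = Ft` for real
`t` and `F²` acts by index reversal: for an exchanged index pair `(k, l)` with
`t̂ₖ ≠ 0`, the vectors `eₖ ± (|t̂ₖ|/t̂ₖ) eₗ` are eigenvectors with eigenvalues
`±|t̂ₖ|`, and for an index `m` fixed by the reversal, `eₘ` is an eigenvector
with eigenvalue `t̂ₘ`. -/
theorem diag_reversal_eigenvectors (n : ℕ) [NeZero n]
    (F : Matrix (Fin n) (Fin n) ℂ)
    (hF : ∀ j k : Fin n, F j k = (1 / Real.sqrt n : ℝ) *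
      Complex.exp (-(2 * Real.pi * Complex.I * (j : ℕ) * (k : ℕ)) / n))
    (t : Fin n → ℝ) (that : Fin n → ℂ)
    (hthat : that = F.mulVec (fun i => (t i : ℂ)))
    (C : (Fin n → ℂ) → (Fin n → ℂ))
    (hC : ∀ (v : Fin n → ℂ) (j : Fin n), C v j = that j * v (-j))
    (k l : Fin n) (hl : l = -k) (hkl : k ≠ l) (hne : that k ≠ 0)
    (a : ℂ) (ha : a = (‖that k‖ : ℂ) / that k) :
    C ((Pi.single k 1 : Fin n → ℂ) + a • (Pi.single l 1 : Fin n → ℂ)) =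
      ((‖that k‖ : ℂ)) • ((Pi.single k 1 : Fin n → ℂ) + a • (Pi.single l 1 : Fin n → ℂ)) ∧
    C ((Pi.single k 1 : Fin n → ℂ) - a • (Pi.single l 1 : Fin n → ℂ)) =
      (-(‖that k‖ : ℂ)) • ((Pi.single k 1 : Fin n → ℂ) - a • (Pi.single l 1 : Fin n → ℂ)) ∧
    (∀ m : Fin n, -m = m → C ((Pi.single m 1 : Fin n → ℂ)) = that m • (Pi.single m 1 : Fin n → ℂ)) :=
  diag_reversal_eigenvectors_general n F hF t that hthat C hC k l hl a ha
end
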